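/- Let Z ~ SN_k(Ω,α) and let B₁, …, B_h be symmetric positive semi-definite k×k real matrices such that (a) B_iΩB_j = 0 for all i ≠ j, and (b) αᵀΩB_iΩα ≠ 0 for at most one index i. Then the random variables ZᵀB₁Z, …, ZᵀB_hZ are mutually independent. -/

import Mathlib

open MeasureTheory Matrix ProbabilityTheory Real

/-- Standard normal cumulative distribution function
`Φ(x) = ∫_{-∞}^x (2π)^{-1/2} exp(-u²/2) du`. -/
noncomputable def stdNormCDF (x : ℝ) : ℝ :=
  ∫ u in Set.Iic x, (2 * Real.pi) ^ (-(1:ℝ)/2) * Real.exp (-(u ^ 2) / 2)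

/-- Density `φ(z; Ω) = (2π)^{-k/2} (det Ω)^{-1/2} exp(-½ zᵀ Ω⁻¹ z)` of the centred
multivariate normal distribution with covariance matrix `Ω`. -/
noncomputable def mvNormalPDF {ι : Type*} [Fintype ι] [DecidableEq ι]
    (Ω : Matrix ι ι ℝ) (z : ι → ℝ) : ℝ :=
  (2 * Real.pi) ^ (-(Fintype.card ι : ℝ) / 2) * Ω.det ^ (-(1:ℝ)/2) *
    Real.exp (-(z ⬝ᵥ Ω⁻¹.mulVec z) / 2)

/-- Density `f(z) = 2 φ(z; Ω) Φ(αᵀ z)` of the multivariate skew-normal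
distribution `SN(Ω, α)`. -/
noncomputable def snPDF {ι : Type*} [Fintype ι] [DecidableEq ι]
    (Ω : Matrix ι ι ℝ) (α : ι → ℝ) (z : ι → ℝ) : ℝ :=
  2 * mvNormalPDF Ω z * stdNormCDF (α ⬝ᵥ z)

/-- A correlation matrix: symmetric positive definite with unit diagonal. -/
def IsCorrelationMatrix {ι : Type*} [Fintype ι] (Ω : Matrix ι ι ℝ) : Prop :=
  Ω.PosDef ∧ ∀ i, Ω i i = 1

/-- The law of the multivariate skew-normal distribution `SN(Ω, α)`:
the measure on `ι → ℝ` with density `snPDF Ω α` w.r.t. Lebesgue measure. -/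
noncomputable def snMeasure {ι : Type*} [Fintype ι] [DecidableEq ι]
    (Ω : Matrix ι ι ℝ) (α : ι → ℝ) : Measure (ι → ℝ) :=
  volume.withDensity fun z => ENNReal.ofReal (snPDF Ω α z)

/-- Chi-square density with `p` degrees of freedom. -/
noncomputable def chiSqPDF (p : ℕ) (x : ℝ) : ℝ :=
  if 0 < x then x ^ ((p:ℝ)/2 - 1) * Real.exp (-x/2) / (2 ^ ((p:ℝ)/2) * Real.Gamma ((p:ℝ)/2))
  else 0

/-- Chi-square law with `p` degrees of freedom. -/
noncomputable def chiSqMeasure (p : ℕ) : Measure ℝ :=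
  volume.withDensity fun x => ENNReal.ofReal (chiSqPDF p x)

/-!
Because `φ` is even and `Φ(t) + Φ(-t) = 1`, the skew-normal density satisfies
`f(z) + f(-z) = 2 φ(z; Ω)`, so `SN(Ω, α)` and `N(0, Ω)` give the same mass to every set that is
invariant under `z ↦ -z`. Quadratic forms are even, hence the family `(Zᵀ B_i Z)_i` has the same
joint law, and the same marginals, as for a Gaussian vector `Y ~ N(0, Ω)`. For the Gaussian vector,
write `B_i = C_iᵀ C_i`; then `B_i Ω B_j = 0` forces `C_i Ω C_jᵀ = 0`, so the jointly Gaussian vectors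
`C_i Y` are uncorrelated, hence independent, and `Yᵀ B_i Y = ‖C_i Y‖²`. The density of `N(0, Ω)`
is matched with `multivariateGaussian 0 Ω` through the change of variables `z = Ω^{1/2} u`.
-/

open WithLp
open scoped ENNReal MatrixOrder RealInnerProductSpace

theorem stdNormCDF_eq_cdf_gaussianReal (x : ℝ) : stdNormCDF x = cdf (gaussianReal 0 1) x := by
  have hpdf (u : ℝ) : (2 * π) ^ (-(1:ℝ)/2) * rexp (-(u ^ 2) / 2) = gaussianPDFReal 0 1 u := by
    rw [gaussianPDFReal, NNReal.coe_one, mul_one, sub_zero, sqrt_eq_rpow,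
      ← rpow_neg (by positivity)]
    ring_nf
  rw [cdf_eq_real, measureReal_def, gaussianReal_apply_eq_integral _ one_ne_zero,
    ENNReal.toReal_ofReal (setIntegral_nonneg measurableSet_Iic fun u _ ↦
      gaussianPDFReal_nonneg _ _ u)]
  simp only [stdNormCDF, hpdf]

@[fun_prop]
theorem measurable_stdNormCDF : Measurable stdNormCDF := by
  rw [funext stdNormCDF_eq_cdf_gaussianReal]
  exact (monotone_cdf _).measurable

theorem stdNormCDF_nonneg (x : ℝ) : 0 ≤ stdNormCDF x :=
  stdNormCDF_eq_cdf_gaussianReal x ▸ cdf_nonneg _ x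

theorem stdNormCDF_add_stdNormCDF_neg (x : ℝ) : stdNormCDF x + stdNormCDF (-x) = 1 := by
  have : NullSingletonClass (gaussianReal 0 1) := nullSingletonClass_gaussianReal one_ne_zero
  have hsymm : (gaussianReal 0 1).real (Set.Iic (-x)) = (gaussianReal 0 1).real (Set.Ioi x) := by
    have hneg : (gaussianReal 0 1).map (fun x ↦ -x) = gaussianReal 0 1 := by
      simpa using gaussianReal_map_neg (μ := 0) (v := 1)
    rw [measureReal_def, measureReal_def, measure_congr Ioi_ae_eq_Ici, ← hneg,
      Measure.map_apply measurable_neg measurableSet_Iic, hneg]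
    simp
  rw [stdNormCDF_eq_cdf_gaussianReal, stdNormCDF_eq_cdf_gaussianReal, cdf_eq_real, cdf_eq_real,
    hsymm, ← Set.compl_Iic, probReal_add_probReal_compl measurableSet_Iic]

theorem MeasureTheory.withDensity_apply_eq_of_add_neg_eq_two_mul {E : Type*}
    [MeasurableSpace E] [InvolutiveNeg E] [MeasurableNeg E] {μ : Measure E} [μ.IsNegInvariant]
    {f g : E → ℝ≥0∞} (hf : Measurable f) (hfg : ∀ x, f x + f (-x) = 2 * g x)
    {s : Set E} (hs : MeasurableSet s) (hsymm : -s = s) :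
    μ.withDensity f s = μ.withDensity g s := by
  have hflip : ∫⁻ x in s, f (-x) ∂μ = ∫⁻ x in s, f x ∂μ := by
    conv_lhs => rw [← hsymm]
    exact (Measure.measurePreserving_neg μ).setLIntegral_comp_preimage hs hf
  rw [withDensity_apply _ hs, withDensity_apply _ hs]
  refine (ENNReal.mul_right_inj two_ne_zero ENNReal.ofNat_ne_top).1 ?_
  calc 2 * ∫⁻ x in s, f x ∂μ = ∫⁻ x in s, f x ∂μ + ∫⁻ x in s, f (-x) ∂μ := by
        rw [hflip, two_mul]
    _ = ∫⁻ x in s, 2 * g x ∂μ := by simp_rw [← lintegral_add_left hf, hfg]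
    _ = 2 * ∫⁻ x in s, g x ∂μ := lintegral_const_mul' _ _ ENNReal.ofNat_ne_top

theorem MeasureTheory.map_mulVec_volume_withDensity {ι : Type*} [Fintype ι] [DecidableEq ι]
    {Q : Matrix ι ι ℝ} (hQ : Q.det ≠ 0) {g : (ι → ℝ) → ℝ≥0∞} (hg : Measurable g) :
    (volume.withDensity g).map (Q *ᵥ ·) =
      volume.withDensity fun z ↦ ENNReal.ofReal |Q.det⁻¹| * g (Q⁻¹ *ᵥ z) := by
  have hmeas : Measurable (Q *ᵥ · : (ι → ℝ) → ι → ℝ) := by fun_prop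
  have hvol : volume.map (Q *ᵥ ·) = ENNReal.ofReal |Q.det⁻¹| • volume :=
    Real.map_matrix_volume_pi_eq_smul_volume_pi hQ
  ext s hs
  rw [Measure.map_apply hmeas hs, withDensity_apply _ (hmeas hs), withDensity_apply _ hs,
    lintegral_const_mul' _ _ ENNReal.ofReal_ne_top, ← smul_eq_mul, ← lintegral_smul_measure,
    ← Measure.restrict_smul, ← hvol,
    setLIntegral_map (f := fun z ↦ g (Q⁻¹ *ᵥ z)) hs (hg.comp (by fun_prop)) hmeas]
  simp [mulVec_mulVec, nonsing_inv_mul _ hQ.isUnit]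

namespace ProbabilityTheory

section Independence

variable {S E κ : Type*} {mS : MeasurableSpace S} [MeasurableSpace E] {β : κ → Type*}
  [∀ i, MeasurableSpace (β i)] {f : ∀ i, E → β i}

theorem iIndepFun_comp_iff_map {P : Measure S} {Z : S → E} (hZ : Measurable Z)
    (hf : ∀ i, Measurable (f i)) :
    iIndepFun (fun i ω ↦ f i (Z ω)) P ↔ iIndepFun f (P.map Z) := by
  simp only [iIndepFun_iff_measure_inter_preimage_eq_mul]
  refine forall_congr' fun T ↦ forall_congr' fun s ↦ forall_congr' fun hs ↦ ?_
  rw [Measure.map_apply hZ (Finset.measurableSet_biInter T fun i hi ↦ hf i (hs i hi)),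
    Finset.prod_congr rfl fun i hi ↦ Measure.map_apply hZ (hf i (hs i hi)), Set.preimage_iInter₂]
  rfl

theorem iIndepFun_congr_measure_of_even [InvolutiveNeg E] {μ ν : Measure E}
    (hμν : ∀ ⦃s⦄, MeasurableSet s → -s = s → μ s = ν s) (hf : ∀ i, Measurable (f i))
    (heven : ∀ i x, f i (-x) = f i x) :
    iIndepFun f μ ↔ iIndepFun f ν := by
  have hsymm (i : κ) (t : Set (β i)) : -(f i ⁻¹' t) = f i ⁻¹' t := by
    ext x; simp [heven]
  simp only [iIndepFun_iff_measure_inter_preimage_eq_mul]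
  refine forall_congr' fun T ↦ forall_congr' fun s ↦ forall_congr' fun hs ↦ ?_
  rw [hμν (Finset.measurableSet_biInter T fun i hi ↦ hf i (hs i hi)) (by ext x; simp [heven]),
    Finset.prod_congr rfl fun i hi ↦ hμν (hf i (hs i hi)) (hsymm i (s i))]

end Independence

section Gaussian

variable {ι : Type*} [Fintype ι]

theorem prod_gaussianPDFReal (w : ι → ℝ) :
    ∏ i, gaussianPDFReal 0 1 (w i) =
      (2 * π) ^ (-(Fintype.card ι : ℝ) / 2) * rexp (-(w ⬝ᵥ w) / 2) := by
  simp only [gaussianPDFReal, NNReal.coe_one, mul_one, sub_zero, Finset.prod_mul_distrib,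
    Finset.prod_const, ← Real.exp_sum, dotProduct, Finset.card_univ]
  congr 1
  · rw [sqrt_eq_rpow, ← rpow_neg (by positivity), ← rpow_natCast, ← rpow_mul (by positivity)]
    ring_nf
  · simp only [← Finset.sum_div, Finset.sum_neg_distrib, sq]

theorem pi_gaussianReal_eq_withDensity :
    Measure.pi (fun _ : ι ↦ gaussianReal 0 1) =
      volume.withDensity fun x ↦ ENNReal.ofReal (∏ i, gaussianPDFReal 0 1 (x i)) := by
  refine Measure.pi_eq fun s hs ↦ ?_
  rw [withDensity_apply _ (.univ_pi hs), volume_pi, Measure.restrict_pi_pi,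
    ← ofReal_integral_eq_lintegral_ofReal
      (Integrable.fintype_prod fun i ↦ (integrable_gaussianPDFReal 0 1).restrict)
      (ae_of_all _ fun x ↦ Finset.prod_nonneg fun i _ ↦ gaussianPDFReal_nonneg 0 1 (x i)),
    integral_fintype_prod_eq_prod (fun _ ↦ gaussianPDFReal 0 1),
    ENNReal.ofReal_prod_of_nonneg fun i _ ↦
      setIntegral_nonneg (hs i) fun x _ ↦ gaussianPDFReal_nonneg 0 1 x]
  simp only [gaussianReal_apply_eq_integral 0 one_ne_zero]

variable [DecidableEq ι]

theorem map_ofLp_multivariateGaussian (μ : EuclideanSpace ℝ ι) (S : Matrix ι ι ℝ) :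
    (multivariateGaussian μ S).map ofLp =
      (Measure.pi fun _ : ι ↦ gaussianReal 0 1).map (fun x ↦ ofLp μ + CFC.sqrt S *ᵥ x) := by
  rw [multivariateGaussian, ← map_pi_eq_stdGaussian, Measure.map_map (by fun_prop) (by fun_prop),
    Measure.map_map (by fun_prop) (by fun_prop)]
  rfl

theorem iIndepFun_toEuclideanCLM_multivariateGaussian {κ : Type*} [Fintype κ]
    {μ : EuclideanSpace ℝ ι} {Ω : Matrix ι ι ℝ} (hΩ : Ω.PosSemidef)
    {C : κ → Matrix ι ι ℝ} (hC : ∀ i j, i ≠ j → C i * Ω * (C j)ᵀ = 0) :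
    iIndepFun (fun i x ↦ toEuclideanCLM (𝕜 := ℝ) (C i) x) (multivariateGaussian μ Ω) := by
  have hlaw := (IsGaussian.hasGaussianLaw_id (μ := multivariateGaussian μ Ω)).map
      (ContinuousLinearMap.pi fun i ↦ toEuclideanCLM (𝕜 := ℝ) (C i))
  refine hlaw.iIndepFun_of_covariance_inner fun i j hij x y ↦ ?_
  have hadj (A : Matrix ι ι ℝ) (x u : EuclideanSpace ℝ ι) :
      ⟪x, toEuclideanCLM (𝕜 := ℝ) A u⟫ = ⟪toEuclideanCLM (𝕜 := ℝ) Aᵀ x, u⟫ := by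
    rw [inner_toEuclideanCLM, real_inner_comm, inner_toEuclideanCLM, mulVec_transpose,
      dotProduct_mulVec, dotProduct_comm]
  simp only [Function.comp_apply, id, ContinuousLinearMap.pi_apply, hadj]
  rw [← covarianceBilin_apply_eq_cov IsGaussian.memLp_two_id,
    covarianceBilin_multivariateGaussian hΩ, ofLp_toEuclideanCLM, ofLp_toEuclideanCLM,
    mulVec_transpose, ← dotProduct_mulVec, mulVec_mulVec, mulVec_mulVec, hC i j hij, zero_mulVec,
    dotProduct_zero]

/-- **Craig's theorem** for the multivariate Gaussian distribution. -/
theorem iIndepFun_quadForm_multivariateGaussian {κ : Type*} [Fintype κ]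
    {μ : EuclideanSpace ℝ ι} {Ω : Matrix ι ι ℝ} (hΩ : Ω.PosSemidef)
    {B : κ → Matrix ι ι ℝ} (hB : ∀ i, (B i).PosSemidef)
    (hBΩB : ∀ i j, i ≠ j → B i * Ω * B j = 0) :
    iIndepFun (fun i (x : EuclideanSpace ℝ ι) ↦ ofLp x ⬝ᵥ B i *ᵥ ofLp x)
      (multivariateGaussian μ Ω) := by
  choose C hC using fun i ↦ CStarAlgebra.nonneg_iff_eq_star_mul_self.mp (hB i).nonneg
  simp only [star_eq_conjTranspose] at hC
  have hCΩC : ∀ i j, i ≠ j → C i * Ω * (C j)ᵀ = 0 := fun i j hij ↦ by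
    have h := hBΩB i j hij
    rwa [hC i, hC j, Matrix.mul_assoc, conjTranspose_mul_self_mul_eq_zero, ← Matrix.mul_assoc,
      mul_conjTranspose_mul_self_eq_zero, conjTranspose_eq_transpose_of_trivial] at h
  have hnorm (i : κ) (x : EuclideanSpace ℝ ι) :
      ofLp x ⬝ᵥ B i *ᵥ ofLp x = ‖toEuclideanCLM (𝕜 := ℝ) (C i) x‖ ^ 2 := by
    rw [hC i, ← mulVec_mulVec, dotProduct_mulVec, conjTranspose_eq_transpose_of_trivial,
      vecMul_transpose, ← real_inner_self_eq_norm_sq, inner_toEuclideanCLM, ofLp_toEuclideanCLM]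
  simp_rw [hnorm]
  exact (iIndepFun_toEuclideanCLM_multivariateGaussian hΩ hCΩC).comp
    (fun _ v ↦ ‖v‖ ^ 2) fun _ ↦ by fun_prop

end Gaussian

end ProbabilityTheory

section MultivariateNormal

variable {ι : Type*} [Fintype ι] [DecidableEq ι] {Ω : Matrix ι ι ℝ}

theorem mvNormalPDF_neg (z : ι → ℝ) : mvNormalPDF Ω (-z) = mvNormalPDF Ω z := by
  simp [mvNormalPDF, mulVec_neg]

theorem mvNormalPDF_nonneg (hΩ : Ω.PosDef) (z : ι → ℝ) : 0 ≤ mvNormalPDF Ω z := by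
  have := hΩ.det_pos
  unfold mvNormalPDF
  positivity

theorem mvNormalPDF_eq_of_mul_transpose_eq {Q : Matrix ι ι ℝ} (hQ : Q * Qᵀ = Ω) (z : ι → ℝ) :
    mvNormalPDF Ω z = |Q.det⁻¹| * ∏ i, gaussianPDFReal 0 1 ((Q⁻¹ *ᵥ z) i) := by
  have hquad : (Q⁻¹ *ᵥ z) ⬝ᵥ (Q⁻¹ *ᵥ z) = z ⬝ᵥ Ω⁻¹ *ᵥ z := by
    rw [← hQ, Matrix.mul_inv_rev, ← transpose_nonsing_inv, ← mulVec_mulVec, dotProduct_mulVec z,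
      vecMul_transpose]
  have hdet : Ω.det ^ (-(1:ℝ)/2) = |Q.det⁻¹| := by
    rw [← hQ, det_mul, det_transpose, ← sq, abs_inv, ← sqrt_sq_eq_abs, sqrt_eq_rpow,
      ← rpow_neg (sq_nonneg _), neg_div]
  rw [prod_gaussianPDFReal, mvNormalPDF, hquad, hdet]
  ring

theorem withDensity_mvNormalPDF_eq_map_multivariateGaussian (hΩ : Ω.PosDef) :
    volume.withDensity (fun z ↦ ENNReal.ofReal (mvNormalPDF Ω z)) =
      (multivariateGaussian 0 Ω).map ofLp := by
  have hsq : CFC.sqrt Ω * (CFC.sqrt Ω)ᵀ = Ω := by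
    rw [← conjTranspose_eq_transpose_of_trivial, (CFC.sqrt_nonneg Ω).posSemidef.isHermitian.eq,
      CFC.sqrt_mul_sqrt_self Ω hΩ.posSemidef.nonneg]
  have hdet : (CFC.sqrt Ω).det ≠ 0 := fun h ↦
    hΩ.det_pos.ne' (by rw [← hsq, det_mul, h, zero_mul])
  simp only [map_ofLp_multivariateGaussian, ofLp_zero, zero_add, pi_gaussianReal_eq_withDensity]
  rw [map_mulVec_volume_withDensity hdet (by fun_prop)]
  simp_rw [← ENNReal.ofReal_mul (abs_nonneg _), mvNormalPDF_eq_of_mul_transpose_eq hsq]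

theorem snMeasure_apply_of_neg_eq (hΩ : Ω.PosDef) (α : ι → ℝ) ⦃s : Set (ι → ℝ)⦄
    (hs : MeasurableSet s) (hsymm : -s = s) :
    snMeasure Ω α s = (multivariateGaussian 0 Ω).map ofLp s := by
  rw [← withDensity_mvNormalPDF_eq_map_multivariateGaussian hΩ]
  refine withDensity_apply_eq_of_add_neg_eq_two_mul (by unfold snPDF mvNormalPDF; fun_prop)
    (fun z ↦ ?_) hs hsymm
  have hφ := mvNormalPDF_nonneg hΩ z
  have hΦ := stdNormCDF_nonneg (α ⬝ᵥ z)
  have hΦneg := stdNormCDF_nonneg (-(α ⬝ᵥ z))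
  rw [snPDF, snPDF, mvNormalPDF_neg, dotProduct_neg, ← ENNReal.ofReal_add (by positivity)
    (by positivity), ← ENNReal.ofReal_ofNat 2, ← ENNReal.ofReal_mul zero_le_two]
  congr 1
  linear_combination (2 * mvNormalPDF Ω z) * stdNormCDF_add_stdNormCDF_neg (α ⬝ᵥ z)

end MultivariateNormal

theorem skewNormal_quadratic_forms_independent_general {k : ℕ}
    (Ω : Matrix (Fin k) (Fin k) ℝ) (hΩ : IsCorrelationMatrix Ω) (α : Fin k → ℝ)
    {S : Type*} [MeasureSpace S]
    (Z : S → Fin k → ℝ) (hZmeas : Measurable Z)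
    (hZlaw : Measure.map Z ℙ = snMeasure Ω α)
    (h : ℕ) (B : Fin h → Matrix (Fin k) (Fin k) ℝ)
    (hB : ∀ i, (B i).PosSemidef)
    (ha : ∀ i j, i ≠ j → B i * Ω * B j = 0) :
    iIndepFun (fun i ω => Z ω ⬝ᵥ (B i).mulVec (Z ω)) ℙ := by
  have hq (i : Fin h) : Measurable fun z : Fin k → ℝ ↦ z ⬝ᵥ B i *ᵥ z := by fun_prop
  refine (iIndepFun_comp_iff_map hZmeas hq).2 ?_
  rw [hZlaw, iIndepFun_congr_measure_of_even (snMeasure_apply_of_neg_eq hΩ.1 α) hq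
    fun i z ↦ by simp [mulVec_neg], ← iIndepFun_comp_iff_map (by fun_prop) hq]
  exact iIndepFun_quadForm_multivariateGaussian hΩ.1.posSemidef hB ha

/-- independence of quadratic forms.  If `Z ~ SN_k(Ω, α)` and the
symmetric positive semi-definite matrices `B i` satisfy (a) `B_iΩB_j = 0` for
`i ≠ j` and (b) `αᵀΩB_iΩα ≠ 0` for at most one `i`, then the quadratic forms
`ZᵀB_iZ` are mutually independent. -/
theorem skewNormal_quadratic_forms_independent {k : ℕ}
    (Ω : Matrix (Fin k) (Fin k) ℝ) (hΩ : IsCorrelationMatrix Ω) (α : Fin k → ℝ)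
    {S : Type*} [MeasureSpace S] [IsProbabilityMeasure (ℙ : Measure S)]
    (Z : S → Fin k → ℝ) (hZmeas : Measurable Z)
    (hZlaw : Measure.map Z ℙ = snMeasure Ω α)
    (h : ℕ) (B : Fin h → Matrix (Fin k) (Fin k) ℝ)
    (hB : ∀ i, (B i).PosSemidef)
    (ha : ∀ i j, i ≠ j → B i * Ω * B j = 0)
    (hb : ∀ i j, α ⬝ᵥ (Ω * B i * Ω).mulVec α ≠ 0 →
      α ⬝ᵥ (Ω * B j * Ω).mulVec α ≠ 0 → i = j) :
    iIndepFun (fun i ω => Z ω ⬝ᵥ (B i).mulVec (Z ω)) ℙ :=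
  skewNormal_quadratic_forms_independent_general Ω hΩ α Z hZmeas hZlaw h B hB ha
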